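/- arXiv:1207.0835 — 6 statements merged into one kernel-verified Lean document; each statement's English description precedes it below -/
import Mathlib

section
/- Let T be a rooted tree and let M be a subset of its vertices that is closed under taking least common ancestors (i.e., for any two vertices u, v in M, their LCA is also in M). Then every connected component C of T − M has at most two neighbors in M: at most one neighbor that is the parent of the root of C, and at most one neighbor that is a child of a vertex of C. -/
/-- `u` is an ancestor of `v` in the rooted tree with parent function `p`. -/
def Anc {α : Type*} (p : α → α) (u v : α) : Prop := ∃ n : ℕ, p^[n] v = u

/-- Adjacency in the tree given by the parent function `p`. -/
def TreeAdj {α : Type*} (p : α → α) (u v : α) : Prop := u ≠ v ∧ (p u = v ∨ p v = u)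

/-- Let `T` be a finite rooted tree (given by a parent function `p` with root `r`) and let
`M` be a set of vertices closed under taking least common ancestors.  Then every connected
component `C` of `T − M` has at most two neighbors in `M`: at most one neighbor that is a
parent of a vertex of `C` (namely the parent of the root of `C`), and at most one neighbor
that is a child of a vertex of `C`. -/
theorem stmt0 {α : Type*} [Fintype α] (p : α → α) (r : α)
    (hroot : p r = r) (hreach : ∀ v, Anc p r v)
    (M : Set α)
    (hLCA : ∀ u ∈ M, ∀ v ∈ M, ∀ w, Anc p w u → Anc p w v →
      (∀ w', Anc p w' u → Anc p w' v → Anc p w' w) → w ∈ M)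
    (C : Set α) (hCne : C.Nonempty) (hCM : Disjoint C M)
    (hconn : ∀ x ∈ C, ∀ y ∈ C,
      Relation.ReflTransGen (fun a b => TreeAdj p a b ∧ a ∈ C ∧ b ∈ C) x y)
    (hmax : ∀ c ∈ C, ∀ v, TreeAdj p c v → v ∉ M → v ∈ C) :
    {m ∈ M | ∃ c ∈ C, p c = m}.Subsingleton ∧
    {m ∈ M | ∃ c ∈ C, p m = c}.Subsingleton ∧
    {m ∈ M | ∃ c ∈ C, TreeAdj p c m}.ncard ≤ 2 := by
  classical
  have hdisj : ∀ {x}, x ∈ C → x ∈ M → False := fun hx hm =>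
    Set.disjoint_left.mp hCM hx hm
  have hiter_r : ∀ n, p^[n] r = r := by
    intro n; induction n with
    | zero => rfl
    | succ n ih => rw [Function.iterate_succ_apply, hroot, ih]
  have hcyc : ∀ x n, 0 < n → p^[n] x = x → x = r := by
    intro x n hn hx
    obtain ⟨k, hk⟩ := hreach x
    have hmul : ∀ m, p^[n * m] x = x := by
      intro m; induction m with
      | zero => simp
      | succ m ih => rw [Nat.mul_succ, Function.iterate_add_apply, hx, ih]
    have hk' : k ≤ n * k := Nat.le_mul_of_pos_left k hn
    calc x = p^[n * k] x := (hmul k).symm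
      _ = p^[n * k - k] (p^[k] x) := by
          rw [← Function.iterate_add_apply, Nat.sub_add_cancel hk']
      _ = r := by rw [hk, hiter_r]
  have hantisym : ∀ u v, Anc p u v → Anc p v u → u = v := by
    rintro u v ⟨a, ha⟩ ⟨b, hb⟩
    rcases Nat.eq_zero_or_pos (a + b) with h0 | hpos
    · have ha0 : a = 0 := by omega
      subst ha0; exact ha.symm
    · have hcy : p^[a + b] u = u := by
        rw [Function.iterate_add_apply, hb, ha]
      have hu : u = r := hcyc u _ hpos hcy
      have hv : v = r := by rw [← hb, hu, hiter_r]
      rw [hu, hv]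
  -- the top vertex of C
  obtain ⟨t, htC, htprop⟩ : ∃ t, t ∈ C ∧ (t = r ∨ p t ∉ C) := by
    by_cases hrC : r ∈ C
    · exact ⟨r, hrC, Or.inl rfl⟩
    · obtain ⟨c0, hc0⟩ := hCne
      have hex : ∃ k, p^[k] c0 ∉ C := by
        obtain ⟨k, hk⟩ := hreach c0
        exact ⟨k, by rw [hk]; exact hrC⟩
      have hspec := Nat.find_spec hex
      cases hk : Nat.find hex with
      | zero => rw [hk] at hspec; exact absurd hc0 hspec
      | succ k' =>
        rw [hk] at hspec
        refine ⟨p^[k'] c0, ?_, Or.inr ?_⟩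
        · have h1 : ¬ (p^[k'] c0 ∉ C) := by
            have := Nat.find_min hex (m := k') (by omega)
            simpa using this
          simpa using h1
        · have heq : p (p^[k'] c0) = p^[k' + 1] c0 :=
            (Function.iterate_succ_apply' p k' c0).symm
          rw [heq]; exact hspec
  -- t is an ancestor of every vertex of C
  have hanc : ∀ x, Relation.ReflTransGen
      (fun a b => TreeAdj p a b ∧ a ∈ C ∧ b ∈ C) t x → Anc p t x := by
    intro x hpath
    induction hpath with
    | refl => exact ⟨0, rfl⟩
    | tail _ h ih =>
      rename_i b c _
      obtain ⟨⟨hne, hor⟩, hbC, hcC⟩ := h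
      obtain ⟨n, hn⟩ := ih
      rcases hor with hbc | hcb
      · -- p b = c : c is the parent of b
        by_cases hbt : b = t
        · rcases htprop with h1 | h2
          · refine ⟨0, ?_⟩
            show c = t
            rw [← hbc, hbt, h1, hroot]
          · rw [hbt] at hbc; rw [hbc] at h2; exact absurd hcC h2
        · match n, hn with
          | 0, hn => exact absurd hn hbt
          | m + 1, hn =>
            refine ⟨m, ?_⟩
            rw [← hbc, ← Function.iterate_succ_apply]
            exact hn
      · -- p c = b : c is a child of b
        exact ⟨n + 1, by rw [Function.iterate_succ_apply, hcb, hn]⟩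
  -- going up from any vertex of C, we stay in C until we reach t
  have hchain : ∀ x, Relation.ReflTransGen
      (fun a b => TreeAdj p a b ∧ a ∈ C ∧ b ∈ C) t x →
      ∀ j, (∀ i < j, p^[i] x ≠ t) → p^[j] x ∈ C := by
    intro x hpath
    induction hpath with
    | refl =>
      intro j hj
      match j with
      | 0 => exact htC
      | j + 1 => exact absurd rfl (hj 0 (Nat.succ_pos _))
    | tail _ h ih =>
      rename_i b c _
      obtain ⟨⟨hne, hor⟩, hbC, hcC⟩ := h
      intro j hj
      rcases hor with hbc | hcb
      · -- p b = c : moved up from b to c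
        by_cases hbt : b = t
        · rcases htprop with h1 | h2
          · have hct : c = t := by rw [← hbc, hbt, h1, hroot]
            match j, hj with
            | 0, _ => exact hcC
            | j + 1, hj => exact absurd hct (hj 0 (Nat.succ_pos _))
          · rw [hbt] at hbc; rw [hbc] at h2; exact absurd hcC h2
        · have heq2 : p^[j] c = p^[j + 1] b := by
            rw [Function.iterate_succ_apply, hbc]
          rw [heq2]
          refine ih (j + 1) ?_
          intro i hi
          match i with
          | 0 => simpa using hbt
          | i + 1 =>
            rw [Function.iterate_succ_apply, hbc]
            exact hj i (by omega)
      · -- p c = b : moved down from b to c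
        match j, hj with
        | 0, _ => exact hcC
        | j + 1, hj =>
          rw [Function.iterate_succ_apply, hcb]
          refine ih j ?_
          intro i hi
          rw [← hcb, ← Function.iterate_succ_apply]
          exact hj (i + 1) (by omega)
  -- Part 1
  have hS1 : {m ∈ M | ∃ c ∈ C, p c = m}.Subsingleton := by
    have key : ∀ m ∈ {m ∈ M | ∃ c ∈ C, p c = m}, m = p t := by
      rintro m ⟨hmM, c, hcC, hpc⟩
      have hct : c = t := by
        by_contra hne
        have hmem : p^[1] c ∈ C := by
          refine hchain c (hconn t htC c hcC) 1 ?_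
          intro i hi
          match i, hi with
          | 0, _ => simpa using hne
        simp only [Function.iterate_one] at hmem
        rw [hpc] at hmem
        exact hdisj hmem hmM
      rw [← hpc, hct]
    intro m1 hm1 m2 hm2
    rw [key m1 hm1, key m2 hm2]
  -- Part 2
  have hS2 : {m ∈ M | ∃ c ∈ C, p m = c}.Subsingleton := by
    rintro m1 ⟨hm1M, c1, hc1C, hpc1⟩ m2 ⟨hm2M, c2, hc2C, hpc2⟩
    -- t is an ancestor of m1 and m2
    have htm : ∀ m c, c ∈ C → p m = c → Anc p t m := by
      intro m c hcC hpc
      obtain ⟨k, hk⟩ := hanc c (hconn t htC c hcC)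
      exact ⟨k + 1, by rw [Function.iterate_succ_apply, hpc, hk]⟩
    have htm1 : Anc p t m1 := htm m1 c1 hc1C hpc1
    have htm2 : Anc p t m2 := htm m2 c2 hc2C hpc2
    -- construct the LCA of m1 and m2
    have hex : ∃ n, Anc p (p^[n] m1) m2 := by
      obtain ⟨k, hk⟩ := hreach m1
      exact ⟨k, by rw [hk]; exact hreach m2⟩
    set n0 := Nat.find hex with hn0def
    set w := p^[n0] m1 with hwdef
    have hw1 : Anc p w m1 := ⟨n0, rfl⟩
    have hw2 : Anc p w m2 := Nat.find_spec hex
    have hmin : ∀ w', Anc p w' m1 → Anc p w' m2 → Anc p w' w := by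
      rintro w' ⟨a, ha⟩ hw'2
      have hge : n0 ≤ a := by
        by_contra hlt
        exact Nat.find_min hex (m := a) (by omega) (by rw [ha]; exact hw'2)
      refine ⟨a - n0, ?_⟩
      rw [hwdef, ← Function.iterate_add_apply, Nat.sub_add_cancel hge, ha]
    have hwM : w ∈ M := hLCA m1 hm1M m2 hm2M w hw1 hw2 hmin
    have htw : Anc p t w := hmin t htm1 htm2
    -- a vertex above a C-vertex is either in C or an ancestor of t
    have habove : ∀ c ∈ C, ∀ j (z : α), p^[j] c = z → z ∈ M → Anc p z t := by
      intro c hcC j z hz hzM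
      by_cases hhyp : ∀ i < j, p^[i] c ≠ t
      · have := hchain c (hconn t htC c hcC) j hhyp
        rw [hz] at this
        exact absurd this (fun h => hdisj h hzM)
      · push_neg at hhyp
        obtain ⟨i, hij, hit⟩ := hhyp
        refine ⟨j - i, ?_⟩
        rw [← hit, ← Function.iterate_add_apply, Nat.sub_add_cancel (le_of_lt hij), hz]
    cases hn : n0 with
    | zero =>
      -- w = m1, so m1 is an ancestor of m2
      have hwm1 : w = m1 := by rw [hwdef, hn]; rfl
      obtain ⟨n, hnn⟩ := hw2
      rw [hwm1] at hnn
      match n, hnn with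
      | 0, hnn => exact (show m2 = m1 from hnn).symm
      | n + 1, hnn =>
        rw [Function.iterate_succ_apply, hpc2] at hnn
        have h1 : Anc p m1 t := habove c2 hc2C n m1 hnn hm1M
        have h2 : m1 = t := hantisym m1 t h1 htm1
        exact absurd htC (by rw [← h2]; exact fun h => hdisj h hm1M)
    | succ n0' =>
      -- w is a strict ancestor of m1, hence above c1
      have hwc1 : p^[n0'] c1 = w := by
        rw [hwdef, hn, Function.iterate_succ_apply, hpc1]
      have h1 : Anc p w t := habove c1 hc1C n0' w hwc1 hwM
      have h2 : w = t := hantisym w t h1 htw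
      exact absurd htC (by rw [← h2]; exact fun h => hdisj h hwM)
  -- Part 3
  refine ⟨hS1, hS2, ?_⟩
  have hsub : {m ∈ M | ∃ c ∈ C, TreeAdj p c m} ⊆
      {m ∈ M | ∃ c ∈ C, p c = m} ∪ {m ∈ M | ∃ c ∈ C, p m = c} := by
    rintro m ⟨hmM, c, hcC, hne, hor⟩
    rcases hor with h | h
    · exact Or.inl ⟨hmM, c, hcC, h⟩
    · exact Or.inr ⟨hmM, c, hcC, h⟩
  calc {m ∈ M | ∃ c ∈ C, TreeAdj p c m}.ncard
      ≤ ({m ∈ M | ∃ c ∈ C, p c = m} ∪ {m ∈ M | ∃ c ∈ C, p m = c}).ncard :=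
        Set.ncard_le_ncard hsub (Set.toFinite _)
    _ ≤ {m ∈ M | ∃ c ∈ C, p c = m}.ncard + {m ∈ M | ∃ c ∈ C, p m = c}.ncard :=
        Set.ncard_union_le _ _
    _ ≤ 1 + 1 := by
        gcongr
        · exact (Set.ncard_le_one (Set.toFinite _)).mpr fun a ha b hb => hS1 ha hb
        · exact (Set.ncard_le_one (Set.toFinite _)).mpr fun a ha b hb => hS2 ha hb
end

section
/- Let G be a graph, let G' be a subgraph of G, and let P be a set of paths in G' such that: (1) the endpoints of each path P ∈ P are not adjacent in G'; (2) any two distinct paths of P share at most one vertex, which must be an endpoint of both. Then the constriction G'|_P — obtained by adding an edge between the endpoints of each path in P and deleting all internal vertices of the paths — is a topological minor of G. -/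
open SimpleGraph

/-- `H` is a topological minor of `G`: there is an injective map of the vertices of `H`
into `G` together with a system of internally disjoint paths of `G` joining the images of
adjacent vertices, avoiding the other branch vertices; i.e. a subdivision of `H` is
isomorphic to a subgraph of `G`. -/
def TopMinor {W V : Type*} (H : SimpleGraph W) (G : SimpleGraph V) : Prop :=
  ∃ (φ : W → V) (P : ∀ u v : W, H.Adj u v → G.Walk (φ u) (φ v)),
    Function.Injective φ ∧
    (∀ u v huv, (P u v huv).IsPath) ∧
    (∀ (u v : W) (huv : H.Adj u v), P v u huv.symm = (P u v huv).reverse) ∧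
    (∀ (u v : W) (huv : H.Adj u v) (w : W), φ w ∈ (P u v huv).support → w = u ∨ w = v) ∧
    (∀ (u v : W) (huv : H.Adj u v) (u' v' : W) (hu'v' : H.Adj u' v'),
      s(u, v) ≠ s(u', v') →
      ∀ x, x ∈ (P u v huv).support → x ∈ (P u' v' hu'v').support → x ∈ Set.range φ)

/-- Let `G'` be a subgraph of `G` and let `(P i)` be a set of paths in `G'` such that the
endpoints of each path are distinct and non-adjacent in `G'`, and any two distinct paths
share at most one vertex, which must be an endpoint of both.  Then the constriction
`G'|_P` — obtained by adding an edge between the endpoints of each path and deleting all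
internal vertices of the paths — is a topological minor of `G`. -/
theorem stmt2 {V : Type*} (G G' : SimpleGraph V) (hsub : G' ≤ G)
    {ι : Type*} (a b : ι → V) (P : ∀ i : ι, G'.Walk (a i) (b i))
    (hpath : ∀ i, (P i).IsPath)
    (hne : ∀ i, a i ≠ b i)
    (hnadj : ∀ i, ¬ G'.Adj (a i) (b i))
    (hdisj : ∀ i j : ι, i ≠ j → ∀ x, x ∈ (P i).support → x ∈ (P j).support →
      (x = a i ∨ x = b i) ∧ (x = a j ∨ x = b j))
    (hone : ∀ i j : ι, i ≠ j → ∀ x y,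
      x ∈ (P i).support → x ∈ (P j).support →
      y ∈ (P i).support → y ∈ (P j).support → x = y) :
    -- the vertices surviving the constriction: those internal to no path
    TopMinor
      (SimpleGraph.fromRel
        (fun x y : {v : V // ∀ i, v ∈ (P i).support → v = a i ∨ v = b i} =>
          G'.Adj x.1 y.1 ∨ ∃ i, x.1 = a i ∧ y.1 = b i))
      G := by
  classical
  set W := {v : V // ∀ i, v ∈ (P i).support → v = a i ∨ v = b i} with hWdef
  set H := SimpleGraph.fromRel
      (fun x y : W => G'.Adj x.1 y.1 ∨ ∃ i, x.1 = a i ∧ y.1 = b i) with hHdef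
  -- the specification for connecting walks
  let Spec : ∀ u v : W, G.Walk u.1 v.1 → Prop := fun u v w =>
    w.IsPath ∧ (∀ x : W, x.1 ∈ w.support → x = u ∨ x = v) ∧
      (w.support = [u.1, v.1] ∨
        ∃ i, (∀ x, x ∈ w.support ↔ x ∈ (P i).support) ∧ s(u.1, v.1) = s(a i, b i))
  have spec_rev : ∀ (u v : W) (w : G.Walk u.1 v.1), Spec u v w → Spec v u w.reverse := by
    rintro u v w ⟨h1, h2, h3⟩
    refine ⟨h1.reverse, ?_, ?_⟩
    · intro x hx
      rw [SimpleGraph.Walk.support_reverse, List.mem_reverse] at hx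
      exact (h2 x hx).symm
    · rcases h3 with h3 | ⟨i, hi, hs⟩
      · left; rw [SimpleGraph.Walk.support_reverse, h3]; rfl
      · right
        exact ⟨i, fun x => by
          rw [SimpleGraph.Walk.support_reverse, List.mem_reverse]; exact hi x,
          (Sym2.eq_swap.trans hs)⟩
  -- existence of a walk satisfying Spec, one-sided version
  have exists_spec_one : ∀ u v : W, u ≠ v →
      (G'.Adj u.1 v.1 ∨ ∃ i, u.1 = a i ∧ v.1 = b i) → ∃ w, Spec u v w := by
    rintro u v huv (h | ⟨i, hu, hv⟩)
    · refine ⟨(SimpleGraph.Path.singleton (hsub h)).1, (SimpleGraph.Path.singleton (hsub h)).2,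
        ?_, Or.inl rfl⟩
      intro x hx
      simp only [SimpleGraph.Path.singleton, SimpleGraph.Walk.support_cons,
        SimpleGraph.Walk.support_nil, List.mem_cons, List.mem_singleton,
        List.not_mem_nil, or_false] at hx
      rcases hx with hx | hx
      · exact Or.inl (Subtype.ext hx)
      · exact Or.inr (Subtype.ext hx)
    · refine ⟨((P i).mapLe hsub).copy hu.symm hv.symm, ?_, ?_, ?_⟩
      · rw [SimpleGraph.Walk.isPath_copy]
        exact (hpath i).mapLe hsub
      · intro x hx
        rw [SimpleGraph.Walk.support_copy, SimpleGraph.Walk.mapLe,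
          SimpleGraph.Walk.support_map] at hx
        have hx' : x.1 ∈ (P i).support := by simpa using hx
        rcases x.2 i hx' with h | h
        · exact Or.inl (Subtype.ext (h.trans hu.symm))
        · exact Or.inr (Subtype.ext (h.trans hv.symm))
      · refine Or.inr ⟨i, fun x => ?_, by rw [hu, hv]⟩
        rw [SimpleGraph.Walk.support_copy, SimpleGraph.Walk.mapLe,
          SimpleGraph.Walk.support_map]
        simp
  have exists_spec : ∀ u v : W, H.Adj u v → ∃ w, Spec u v w := by
    intro u v huv
    rw [hHdef, SimpleGraph.fromRel_adj] at huv
    obtain ⟨hne', h | h⟩ := huv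
    · exact exists_spec_one u v hne' h
    · obtain ⟨w, hw⟩ := exists_spec_one v u (Ne.symm hne') h
      exact ⟨w.reverse, spec_rev v u w hw⟩
  -- choose the walks and symmetrize using a well-order
  let f : ∀ u v : W, H.Adj u v → G.Walk u.1 v.1 := fun u v huv =>
    (exists_spec u v huv).choose
  have hf : ∀ u v huv, Spec u v (f u v huv) := fun u v huv =>
    (exists_spec u v huv).choose_spec
  let Q : ∀ u v : W, H.Adj u v → G.Walk u.1 v.1 := fun u v huv =>
    if WellOrderingRel u v then f u v huv else (f v u huv.symm).reverse
  have hQ : ∀ u v huv, Spec u v (Q u v huv) := by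
    intro u v huv
    by_cases h : WellOrderingRel u v
    · simpa only [Q, if_pos h] using hf u v huv
    · simpa only [Q, if_neg h] using spec_rev v u _ (hf v u huv.symm)
  have hQrev : ∀ (u v : W) (huv : H.Adj u v), Q v u huv.symm = (Q u v huv).reverse := by
    intro u v huv
    have hne' : u ≠ v := huv.ne
    rcases trichotomous_of WellOrderingRel u v with h | h | h
    · have h' : ¬ WellOrderingRel v u := asymm h
      simp only [Q, if_pos h, if_neg h']
    · exact absurd h hne'
    · have h' : ¬ WellOrderingRel u v := asymm h
      simp only [Q, if_pos h, if_neg h', SimpleGraph.Walk.reverse_reverse]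
  refine ⟨Subtype.val, Q, Subtype.val_injective, fun u v huv => (hQ u v huv).1, hQrev,
    fun u v huv w hw => (hQ u v huv).2.1 w hw, ?_⟩
  -- the intersection condition
  intro u v huv u' v' hu'v' hne' x hx hx'
  rcases (hQ u v huv).2.2 with h1 | ⟨i, hi, hsi⟩
  · rw [h1] at hx
    simp only [List.mem_cons, List.not_mem_nil, or_false] at hx
    rcases hx with hx | hx
    · exact ⟨u, hx.symm⟩
    · exact ⟨v, hx.symm⟩
  rcases (hQ u' v' hu'v').2.2 with h2 | ⟨j, hj, hsj⟩
  · rw [h2] at hx'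
    simp only [List.mem_cons, List.not_mem_nil, or_false] at hx'
    rcases hx' with hy | hy
    · exact ⟨u', hy.symm⟩
    · exact ⟨v', hy.symm⟩
  by_cases hij : i = j
  · subst hij
    exfalso
    apply hne'
    have : s(u.1, v.1) = s(u'.1, v'.1) := hsi.trans hsj.symm
    have hmap : Sym2.map (Subtype.val : W → V) s(u, v) = Sym2.map Subtype.val s(u', v') := by
      simpa using this
    exact Sym2.map.injective Subtype.val_injective hmap
  · have hxi : x ∈ (P i).support := (hi x).mp hx
    have hxj : x ∈ (P j).support := (hj x).mp hx'
    have hend := (hdisj i j hij x hxi hxj).1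
    have hxe : x = u.1 ∨ x = v.1 := by
      rw [Sym2.eq, Sym2.rel_iff', Prod.mk.injEq, Prod.swap_prod_mk, Prod.mk.injEq] at hsi
      rcases hsi with ⟨hu, hv⟩ | ⟨hu, hv⟩
      · rcases hend with h | h
        · exact Or.inl (h.trans hu.symm)
        · exact Or.inr (h.trans hv.symm)
      · rcases hend with h | h
        · exact Or.inr (h.trans hv.symm)
        · exact Or.inl (h.trans hu.symm)
    rcases hxe with h | h
    · exact ⟨u, h.symm⟩
    · exact ⟨v, h.symm⟩
end

section
/- Every d-degenerate graph on n vertices has at most 2^d · n nonempty cliques (complete vertex subsets, not necessarily maximal). -/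
open SimpleGraph

/-- A `d`-degenerate graph: every nonempty subgraph has a vertex of degree at most `d`. -/
def IsDegenerate {V : Type*} (G : SimpleGraph V) (d : ℕ) : Prop :=
  ∀ H : G.Subgraph, H.verts.Nonempty → ∃ v ∈ H.verts, (H.neighborSet v).ncard ≤ d

/-!
Pick a vertex `v` of degree at most `d` in the subgraph induced on the vertex set `A`. A clique
of `A` through `v` is `v` together with a subset of the at most `d` neighbours of `v` in `A`, so
there are at most `2 ^ d` of them; the cliques avoiding `v` are the cliques of `A \ {v}`, which
are counted by induction on `A`.
-/

open Finset Classical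

namespace SimpleGraph

variable {V : Type*} (G : SimpleGraph V)

noncomputable def cliquesIn (A : Finset V) : Finset (Finset V) :=
  {s ∈ A.powerset | s.Nonempty ∧ G.IsClique (s : Set V)}

theorem card_filter_mem_cliquesIn_le (A : Finset V) (v : V) :
    #{s ∈ G.cliquesIn A | v ∈ s} ≤ 2 ^ #{w ∈ A | G.Adj v w} := by
  rw [← card_powerset]
  refine card_le_card_of_injOn (·.erase v) ?_ ?_
  · intro s hs
    simp only [cliquesIn, coe_filter, mem_filter, mem_powerset, Set.mem_ofPred_eq] at hs
    obtain ⟨⟨hsA, -, hclique⟩, hv⟩ := hs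
    simp only [coe_powerset, Set.mem_preimage, Set.mem_powerset_iff, coe_subset]
    intro w hw
    exact mem_filter.2 ⟨hsA (mem_of_mem_erase hw),
      hclique hv (mem_of_mem_erase hw) (ne_of_mem_erase hw).symm⟩
  · intro s hs t ht hst
    simp only [coe_filter, Set.mem_ofPred_eq] at hs ht
    rw [← insert_erase hs.2, ← insert_erase ht.2]
    exact congrArg (insert v) hst

theorem filter_notMem_cliquesIn (A : Finset V) (v : V) :
    {s ∈ G.cliquesIn A | v ∉ s} = G.cliquesIn (A.erase v) := by
  ext s
  simp only [cliquesIn, mem_filter, mem_powerset, subset_erase]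
  tauto

end SimpleGraph

theorem IsDegenerate.exists_card_adj_le {V : Type*} {G : SimpleGraph V} {d : ℕ}
    (h : IsDegenerate G d) {A : Finset V} (hA : A.Nonempty) :
    ∃ v ∈ A, #{w ∈ A | G.Adj v w} ≤ d := by
  obtain ⟨v, hv, hdeg⟩ := h ((⊤ : G.Subgraph).induce A) hA
  have hnbr : ((⊤ : G.Subgraph).induce A).neighborSet v = ↑{w ∈ A | G.Adj v w} := by
    ext w
    simp only [Subgraph.neighborSet, Subgraph.induce_adj, Subgraph.top_adj, Set.mem_ofPred_eq,
      coe_filter, mem_coe]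
    exact ⟨fun ⟨_, hw, hadj⟩ => ⟨hw, hadj⟩, fun ⟨hw, hadj⟩ => ⟨hv, hw, hadj⟩⟩
  exact ⟨v, hv, by rwa [hnbr, Set.ncard_coe_finset] at hdeg⟩

theorem IsDegenerate.card_cliquesIn_le {V : Type*} {G : SimpleGraph V} {d : ℕ}
    (h : IsDegenerate G d) (A : Finset V) : #(G.cliquesIn A) ≤ 2 ^ d * #A := by
  induction A using Finset.strongInduction with
  | _ A ih =>
  rcases A.eq_empty_or_nonempty with rfl | hA
  · simp [cliquesIn]
  obtain ⟨v, hv, hdeg⟩ := h.exists_card_adj_le hA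
  calc #(G.cliquesIn A)
      = #{s ∈ G.cliquesIn A | v ∈ s} + #{s ∈ G.cliquesIn A | v ∉ s} :=
        (card_filter_add_card_filter_not _).symm
    _ ≤ 2 ^ d + 2 ^ d * #(A.erase v) := by
        rw [filter_notMem_cliquesIn]
        gcongr
        · exact (G.card_filter_mem_cliquesIn_le A v).trans (Nat.pow_le_pow_right two_pos hdeg)
        · exact ih _ (erase_ssubset hv)
    _ = 2 ^ d * #A := by rw [← card_erase_add_one hv]; ring

/-- Every `d`-degenerate graph on `n` vertices has at most `2^d * n` nonempty cliques
(complete vertex subsets, not necessarily maximal). -/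
theorem stmt7 {V : Type*} [Fintype V] (G : SimpleGraph V) (d : ℕ)
    (h : IsDegenerate G d) :
    {s : Finset V | s.Nonempty ∧ G.IsClique (s : Set V)}.ncard ≤ 2 ^ d * Fintype.card V := by
  have hset : {s : Finset V | s.Nonempty ∧ G.IsClique (s : Set V)} = ↑(G.cliquesIn univ) := by
    ext s; simp [cliquesIn]
  rw [hset, Set.ncard_coe_finset]
  exact h.card_cliquesIn_le univ
end

section
/- Let r ≥ 2, let G be a graph with no K_r minor, let X ⊆ V(G), and let C_1, …, C_ℓ be pairwise vertex-disjoint connected subsets of V(G) \ X such that each C_i has at least r neighbors in X. Then ℓ + |E(G[X])| ≤ e(|X|, r), where e(n, r) denotes the maximum number of edges of an n-vertex graph with no K_r minor. In particular, ℓ ≤ e(|X|, r). -/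
/-!
Contract the sets `C i` one at a time into branch sets of a minor model of a graph `H` on `X`,
starting from `H = G[X]` with singleton branch sets. The graph `H` is a minor of `G`, so it has
no `r`-clique; as `C i` is adjacent to at least `r` branch sets, two of them, `a` and `b`, are
nonadjacent in `H`, and merging `C i` into the branch set of `a` yields a model of `H + ab`.
After `ℓ` steps `H` is a `K_r`-minor-free graph on `|X|` vertices with `|E(G[X])| + ℓ` edges.
-/

open SimpleGraph

/-- `H` is a minor of `G`: there is a family of nonempty, pairwise disjoint, connected
branch sets in `G`, one for each vertex of `H`, such that branch sets of adjacent
vertices of `H` are joined by an edge of `G`. -/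
def MinorOf {W V : Type*} (H : SimpleGraph W) (G : SimpleGraph V) : Prop :=
  ∃ B : W → Set V,
    (∀ w, (G.induce (B w)).Connected) ∧
    (Pairwise fun w w' => Disjoint (B w) (B w')) ∧
    (∀ u v : W, H.Adj u v → ∃ x ∈ B u, ∃ y ∈ B v, G.Adj x y)

namespace SimpleGraph

variable {V W : Type*} {G : SimpleGraph V} {H : SimpleGraph W}

theorem Iso.ncard_edgeSet_eq {G' : SimpleGraph W} (e : G ≃g G') :
    G.edgeSet.ncard = G'.edgeSet.ncard := by
  rw [← Nat.card_coe_set_eq, ← Nat.card_coe_set_eq, Nat.card_congr e.mapEdgeSet]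

theorem ncard_edgeSet_sup_edge [Finite W] {a b : W} (hab : a ≠ b) (hn : ¬ H.Adj a b) :
    (H ⊔ edge a b).edgeSet.ncard = H.edgeSet.ncard + 1 := by
  rw [edgeSet_sup, edgeSet_edge_of_ne hab, Set.union_singleton,
    Set.ncard_insert_of_notMem (H.mem_edgeSet.not.2 hn)]

theorem CliqueFree.exists_ne_not_adj {r : ℕ} (hH : H.CliqueFree r) {N : Set W}
    (hN : r ≤ N.ncard) : ∃ a ∈ N, ∃ b ∈ N, a ≠ b ∧ ¬ H.Adj a b := by
  by_contra! hclique
  obtain ⟨t, htN, rfl⟩ := Set.exists_subset_card_eq hN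
  obtain ht | ht := t.finite_or_infinite
  · refine hH ht.toFinset ⟨?_, (Set.ncard_eq_toFinset_card t ht).symm⟩
    rw [Set.Finite.coe_toFinset]
    exact fun a ha b hb hab => hclique a (htN ha) b (htN hb) hab
  · exact not_cliqueFree_zero (ht.ncard ▸ hH)

end SimpleGraph

section Update

variable {V W : Type*} [DecidableEq W]

theorem subset_update_union (B : W → Set V) (a : W) (C : Set V) (w : W) :
    B w ⊆ Function.update B a (B a ∪ C) w := by
  rcases eq_or_ne w a with rfl | hw
  · simp
  · simp [hw]

theorem update_union_subset (B : W → Set V) (a : W) (C : Set V) (w : W) :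
    Function.update B a (B a ∪ C) w ⊆ B w ∪ C := by
  rcases eq_or_ne w a with rfl | hw
  · simp
  · simp [hw]

end Update

section Minor

variable {U V W : Type*} {G : SimpleGraph V} {H : SimpleGraph W} {K : SimpleGraph U}

structure IsMinorModel (H : SimpleGraph W) (G : SimpleGraph V) (B : W → Set V) : Prop where
  connected : ∀ w, (G.induce (B w)).Connected
  pairwise_disjoint : Pairwise fun w w' => Disjoint (B w) (B w')
  exists_adj : ∀ u v, H.Adj u v → ∃ x ∈ B u, ∃ y ∈ B v, G.Adj x y

theorem minorOf_iff : MinorOf H G ↔ ∃ B, IsMinorModel H G B :=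
  ⟨fun ⟨B, h₁, h₂, h₃⟩ => ⟨B, h₁, h₂, h₃⟩, fun ⟨B, h₁, h₂, h₃⟩ => ⟨B, h₁, h₂, h₃⟩⟩

theorem isMinorModel_singleton (f : H ↪g G) : IsMinorModel H G fun w => {f w} where
  connected _ := .of_subsingleton
  pairwise_disjoint _ _ h := Set.disjoint_singleton.2 (f.injective.ne h)
  exists_adj u v h := ⟨f u, rfl, f v, rfl, f.map_rel_iff.2 h⟩

theorem IsMinorModel.minorOf {B : W → Set V} (hB : IsMinorModel H G B) : MinorOf H G :=
  minorOf_iff.2 ⟨B, hB⟩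

theorem MinorOf.of_embedding (f : H ↪g G) : MinorOf H G :=
  (isMinorModel_singleton f).minorOf

namespace IsMinorModel

variable {B : W → Set V}

theorem comp (hB : IsMinorModel H G B) (f : K ↪g H) : IsMinorModel K G (B ∘ f) where
  connected w := hB.connected (f w)
  pairwise_disjoint _ _ h := hB.pairwise_disjoint (f.injective.ne h)
  exists_adj _ _ h := hB.exists_adj _ _ (f.map_rel_iff.2 h)

theorem connected_biUnion_support (hB : IsMinorModel H G B) {a b : W} (p : H.Walk a b) :
    (G.induce (⋃ w ∈ p.support, B w)).Connected := by
  induction p with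
  | @nil u => rw [Walk.support_nil, show ⋃ w ∈ [u], B w = B u by simp]; exact hB.connected u
  | @cons u v _ h p ih =>
    obtain ⟨x, hx, y, hy, hxy⟩ := hB.exists_adj u v h
    rw [Walk.support_cons, show ⋃ w ∈ u :: p.support, B w = B u ∪ ⋃ w ∈ p.support, B w by simp]
    exact connected_induce_union (hB.connected u).preconnected ih.preconnected hx
      (Set.mem_biUnion p.start_mem_support hy) hxy

theorem connected_biUnion (hB : IsMinorModel H G B) {s : Set W} (hs : (H.induce s).Connected) :
    (G.induce (⋃ w ∈ s, B w)).Connected := by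
  have hBs := hB.comp (Embedding.induce s)
  have hunion : ⋃ w ∈ s, B w = ⋃ w : s, B w := Set.biUnion_eq_iUnion _ _
  obtain ⟨w₀⟩ := hs.nonempty
  obtain ⟨x₀⟩ := (hB.connected w₀).nonempty
  rw [hunion]
  refine G.induce_connected_of_patches x₀ (Set.mem_iUnion_of_mem w₀ x₀.2) fun {x} hx => ?_
  obtain ⟨w, hxw⟩ := Set.mem_iUnion.1 hx
  obtain ⟨p⟩ := hs.preconnected w₀ w
  refine ⟨_, Set.iUnion₂_subset fun w _ => Set.subset_iUnion (fun w : s => B w) w,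
    Set.mem_iUnion₂_of_mem (s := fun (w : s) _ => B w) p.start_mem_support x₀.2,
    Set.mem_iUnion₂_of_mem (s := fun (w : s) _ => B w) p.end_mem_support hxw, ?_⟩
  exact (hBs.connected_biUnion_support p).preconnected _ _

end IsMinorModel

theorem MinorOf.trans (hKH : MinorOf K H) (hHG : MinorOf H G) : MinorOf K G := by
  obtain ⟨A, hA⟩ := minorOf_iff.1 hKH
  obtain ⟨B, hB⟩ := minorOf_iff.1 hHG
  refine minorOf_iff.2 ⟨fun u => ⋃ w ∈ A u, B w, fun u => hB.connected_biUnion (hA.connected u),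
    fun u u' huu' => ?_, fun u v huv => ?_⟩
  · simp only [Set.disjoint_iUnion_left, Set.disjoint_iUnion_right]
    intro w' hw' w hw
    refine hB.pairwise_disjoint ?_
    rintro rfl
    exact (hA.pairwise_disjoint huu').ne_of_mem hw hw' rfl
  · obtain ⟨w, hw, w', hw', hww'⟩ := hA.exists_adj u v huv
    obtain ⟨x, hx, y, hy, hxy⟩ := hB.exists_adj w w' hww'
    exact ⟨x, Set.mem_biUnion hw hx, y, Set.mem_biUnion hw' hy, hxy⟩

theorem MinorOf.cliqueFree {r : ℕ} (hG : ¬ MinorOf (⊤ : SimpleGraph (Fin r)) G)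
    (hHG : MinorOf H G) : H.CliqueFree r := by
  by_contra h
  exact hG ((MinorOf.of_embedding (topEmbeddingOfNotCliqueFree h)).trans hHG)

def adjBranches (G : SimpleGraph V) (B : W → Set V) (C : Set V) : Set W :=
  {w | ∃ c ∈ C, ∃ x ∈ B w, G.Adj c x}

theorem adjBranches_mono {B B' : W → Set V} (h : ∀ w, B w ⊆ B' w) (C : Set V) :
    adjBranches G B C ⊆ adjBranches G B' C :=
  fun _ ⟨c, hc, x, hx, hcx⟩ => ⟨c, hc, x, h _ hx, hcx⟩

theorem IsMinorModel.sup_edge [DecidableEq W] {B : W → Set V} (hB : IsMinorModel H G B)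
    {C : Set V} (hC : (G.induce C).Connected) (hCB : ∀ w, Disjoint C (B w)) {a b : W}
    (ha : a ∈ adjBranches G B C) (hb : b ∈ adjBranches G B C) :
    IsMinorModel (H ⊔ edge a b) G (Function.update B a (B a ∪ C)) := by
  have hsub := subset_update_union B a C
  refine ⟨fun w => ?_, fun w w' hww' => ?_, fun w w' hww' => ?_⟩
  · rcases eq_or_ne w a with rfl | hw
    · obtain ⟨c, hc, x, hx, hcx⟩ := ha
      rw [Function.update_self]
      exact connected_induce_union (hB.connected w).preconnected hC.preconnected hx hc hcx.symm
    · rw [Function.update_of_ne hw]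
      exact hB.connected w
  · rcases eq_or_ne w a with rfl | hw
    · rw [Function.update_self, Function.update_of_ne hww'.symm]
      exact Disjoint.union_left (hB.pairwise_disjoint hww') (hCB w')
    rcases eq_or_ne w' a with rfl | hw'
    · rw [Function.update_self, Function.update_of_ne hww']
      exact Disjoint.union_right (hB.pairwise_disjoint hww') (hCB w).symm
    · rw [Function.update_of_ne hw, Function.update_of_ne hw']
      exact hB.pairwise_disjoint hww'
  · rcases (sup_adj _ _ _ _).1 hww' with hH | hedge
    · obtain ⟨x, hx, y, hy, hxy⟩ := hB.exists_adj w w' hH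
      exact ⟨x, hsub w hx, y, hsub w' hy, hxy⟩
    obtain ⟨c, hc, x, hx, hcx⟩ := hb
    have hcB : c ∈ Function.update B a (B a ∪ C) a := by simp [hc]
    rcases ((edge_adj _ _ _ _).1 hedge).1 with ⟨rfl, rfl⟩ | ⟨rfl, rfl⟩
    · exact ⟨c, hcB, x, hsub _ hx, hcx⟩
    · exact ⟨x, hsub _ hx, c, hcB, hcx.symm⟩

theorem ncard_adjBranches_singleton (X C : Set V) :
    (adjBranches G (fun x : X => {(x : V)}) C).ncard = (X ∩ {x | ∃ c ∈ C, G.Adj c x}).ncard := by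
  rw [← Subtype.image_preimage_coe, Set.ncard_image_of_injective _ Subtype.val_injective]
  congr 1
  ext x
  simp [adjBranches]

theorem IsMinorModel.add_ncard_edgeSet_le [Finite W] {r E : ℕ}
    (hG : ¬ MinorOf (⊤ : SimpleGraph (Fin r)) G)
    (hE : ∀ H' : SimpleGraph W, ¬ MinorOf (⊤ : SimpleGraph (Fin r)) H' → H'.edgeSet.ncard ≤ E)
    {ℓ : ℕ} (C : Fin ℓ → Set V) (hdisj : Pairwise fun i j => Disjoint (C i) (C j))
    (hconn : ∀ i, (G.induce (C i)).Connected)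
    {B : W → Set V} (hB : IsMinorModel H G B) (hCB : ∀ i w, Disjoint (C i) (B w))
    (hnbr : ∀ i, r ≤ (adjBranches G B (C i)).ncard) :
    ℓ + H.edgeSet.ncard ≤ E := by
  classical
  induction ℓ generalizing H B with
  | zero => simpa using hE H fun h => hG (h.trans hB.minorOf)
  | succ ℓ ih =>
    obtain ⟨a, ha, b, hb, hab, hn⟩ := (hB.minorOf.cliqueFree hG).exists_ne_not_adj (hnbr 0)
    have := ih (C ∘ Fin.succ) (hdisj.comp_of_injective (Fin.succ_injective _))
      (fun i => hconn _) (hB.sup_edge (hconn 0) (hCB 0) ha hb)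
      (fun i w => ((hCB _ w).union_right (hdisj (Fin.succ_ne_zero i))).mono_right
        (update_union_subset B a _ w))
      (fun i => (hnbr i.succ).trans
        (Set.ncard_le_ncard (adjBranches_mono (subset_update_union B a _) _)))
    rw [ncard_edgeSet_sup_edge hab hn] at this
    omega

end Minor

theorem stmt10_general {V : Type*} (G : SimpleGraph V) (r : ℕ)
    (hG : ¬ MinorOf (⊤ : SimpleGraph (Fin r)) G)
    (X : Finset V) (ℓ : ℕ) (C : Fin ℓ → Set V)
    (hdisj : Pairwise fun i j => Disjoint (C i) (C j))
    (hX : ∀ i, Disjoint (C i) (X : Set V))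
    (hconn : ∀ i, (G.induce (C i)).Connected)
    (hnbr : ∀ i, r ≤ ((X : Set V) ∩ {x | ∃ c ∈ C i, G.Adj c x}).ncard)
    (E : ℕ)
    (hE : ∀ G' : SimpleGraph (Fin X.card), ¬ MinorOf (⊤ : SimpleGraph (Fin r)) G' →
      G'.edgeSet.ncard ≤ E) :
    ℓ + (G.induce (X : Set V)).edgeSet.ncard ≤ E := by
  have hEX : ∀ H : SimpleGraph (X : Set V), ¬ MinorOf (⊤ : SimpleGraph (Fin r)) H →
      H.edgeSet.ncard ≤ E := fun H hH => by
    let e := H.overFinIso (by simp : Fintype.card (X : Set V) = X.card)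
    rw [e.ncard_edgeSet_eq]
    exact hE _ fun h => hH (h.trans (.of_embedding e.symm.toEmbedding))
  refine (isMinorModel_singleton (Embedding.induce (X : Set V))).add_ncard_edgeSet_le hG hEX
    C hdisj hconn (fun i x => ?_) fun i => ?_
  · exact Set.disjoint_singleton_right.2 fun h => (hX i).ne_of_mem h x.2 rfl
  · exact (hnbr i).trans_eq (ncard_adjBranches_singleton (X : Set V) (C i)).symm

/-- Let `r ≥ 2`, let `G` have no `K_r` minor, and let `C_1, …, C_ℓ` be pairwise disjoint
connected subsets of `V(G) \ X`, each with at least `r` neighbors in `X`.  If `E` bounds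
the number of edges of every `K_r`-minor-free graph on `|X|` vertices, then
`ℓ + |E(G[X])| ≤ E`; in particular `ℓ ≤ E`. -/
theorem stmt10 {V : Type*} (G : SimpleGraph V) (r : ℕ) (hr : 2 ≤ r)
    (hG : ¬ MinorOf (⊤ : SimpleGraph (Fin r)) G)
    (X : Finset V) (ℓ : ℕ) (C : Fin ℓ → Set V)
    (hdisj : Pairwise fun i j => Disjoint (C i) (C j))
    (hX : ∀ i, Disjoint (C i) (X : Set V))
    (hconn : ∀ i, (G.induce (C i)).Connected)
    (hnbr : ∀ i, r ≤ ((X : Set V) ∩ {x | ∃ c ∈ C i, G.Adj c x}).ncard)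
    (E : ℕ)
    (hE : ∀ G' : SimpleGraph (Fin X.card), ¬ MinorOf (⊤ : SimpleGraph (Fin r)) G' →
      G'.edgeSet.ncard ≤ E) :
    ℓ + (G.induce (X : Set V)).edgeSet.ncard ≤ E :=
  stmt10_general G r hG X ℓ C hdisj hX hconn hnbr E hE
end

section
/- Let G be a graph, let N ⊆ V(G), and let Y be an independent set of vertices disjoint from N such that every vertex of Y has neighborhood exactly N and |Y| > |N|. For any vertex y ∈ Y, the graph G has an edge dominating set of size at most k if and only if G − y has an edge dominating set of size at most k. -/
/-!
An edge dominating set of `G` is pushed off `y` by the map sending `y` to another twin `y'`,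
a graph endomorphism since `N(y) = N(y')`; such a `y'` exists by `|Y| > |N|` once `N ≠ ∅`, and
for `N = ∅` there is nothing to do. Conversely, an edge dominating set `D` of `G - y` also
dominates the edges at `y` as soon as it covers `N`. If it misses some `n ∈ N`, then every twin
other than `y` is covered through its edge to `n`, by pairwise distinct edges because twins are
nonadjacent; these at least `|Y| - 1 ≥ |N|` edges can be traded for the star from one twin to `N`.
-/

open SimpleGraph

def IsEDS {V : Type*} (G : SimpleGraph V) (D : Set (Sym2 V)) : Prop :=
  D ⊆ G.edgeSet ∧ ∀ e ∈ G.edgeSet, ∃ f ∈ D, ∃ x, x ∈ e ∧ x ∈ f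

section Transfer

variable {V W : Type*}

theorem isEDS_map_image_iff (φ : W ↪ V) (H : SimpleGraph W) (D : Set (Sym2 W)) :
    IsEDS (H.map φ) (φ.sym2Map '' D) ↔ IsEDS H D := by
  have hmem : ∀ {x : V} {e f : Sym2 W}, (x ∈ φ.sym2Map e ∧ x ∈ φ.sym2Map f) ↔
      ∃ w, (w ∈ e ∧ w ∈ f) ∧ φ w = x := fun {x e f} => by
    simp only [Function.Embedding.sym2Map_apply, Sym2.mem_map]
    constructor
    · rintro ⟨⟨a, ha, rfl⟩, ⟨b, hb, hab⟩⟩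
      exact ⟨a, ⟨ha, φ.injective hab ▸ hb⟩, rfl⟩
    · rintro ⟨w, ⟨he, hf⟩, rfl⟩
      exact ⟨⟨w, he, rfl⟩, ⟨w, hf, rfl⟩⟩
  simp only [IsEDS, edgeSet_map, Set.image_subset_image_iff φ.sym2Map.injective,
    Set.forall_mem_image, Set.exists_mem_image, hmem]
  simp

theorem exists_isEDS_map_iff (φ : W ↪ V) (H : SimpleGraph W) (k : ℕ) :
    (∃ D, IsEDS (H.map φ) D ∧ D.ncard ≤ k) ↔ ∃ D, IsEDS H D ∧ D.ncard ≤ k := by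
  constructor
  · rintro ⟨D, hD, hk⟩
    have hrange : D ⊆ Set.range φ.sym2Map :=
      hD.1.trans (edgeSet_map φ H ▸ Set.image_subset_range _ _)
    rw [← Set.image_preimage_eq_of_subset hrange] at hD hk
    refine ⟨_, (isEDS_map_image_iff φ H _).mp hD, ?_⟩
    rwa [Set.ncard_image_of_injective _ φ.sym2Map.injective] at hk
  · rintro ⟨D, hD, hk⟩
    refine ⟨_, (isEDS_map_image_iff φ H D).mpr hD, ?_⟩
    rwa [Set.ncard_image_of_injective _ φ.sym2Map.injective]

end Transfer

namespace SimpleGraph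

variable {V : Type*} (G : SimpleGraph V)

theorem spanningCoe_induce_ne (y : V) :
    (G.induce {x | x ≠ y}).spanningCoe = G.deleteIncidenceSet y := by
  ext a b
  simp only [map_adj, comap_adj, Function.Embedding.coe_subtype, deleteIncidenceSet_adj]
  aesop

theorem exists_isEDS_induce_ne_iff (y : V) (k : ℕ) :
    (∃ D, IsEDS (G.induce {x | x ≠ y}) D ∧ D.ncard ≤ k) ↔
      ∃ D, IsEDS (G.deleteIncidenceSet y) D ∧ D.ncard ≤ k := by
  rw [← spanningCoe_induce_ne]
  exact (exists_isEDS_map_iff _ _ k).symm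

variable {G}

theorem mem_edgeSet_deleteIncidenceSet {y : V} {e : Sym2 V} :
    e ∈ (G.deleteIncidenceSet y).edgeSet ↔ e ∈ G.edgeSet ∧ y ∉ e := by
  rw [edgeSet_deleteIncidenceSet, incidenceSet]
  aesop

theorem neighborSet_deleteIncidenceSet_of_ne {y v : V} (h : v ≠ y) :
    (G.deleteIncidenceSet y).neighborSet v = G.neighborSet v \ {y} := by
  ext w
  simp [deleteIncidenceSet_adj, h]

theorem deleteIncidenceSet_eq_self {y : V} (h : G.neighborSet y = ∅) :
    G.deleteIncidenceSet y = G := by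
  ext a b
  simp only [deleteIncidenceSet_adj, and_iff_left_iff_imp]
  intro hab
  constructor <;> rintro rfl
  exacts [Set.eq_empty_iff_forall_notMem.mp h b hab,
    Set.eq_empty_iff_forall_notMem.mp h a hab.symm]

theorem exists_adj_of_mem_edgeSet {e : Sym2 V} (he : e ∈ G.edgeSet) {v : V} (hv : v ∈ e) :
    ∃ w, e = s(v, w) ∧ G.Adj v w := by
  obtain ⟨w, rfl⟩ := Sym2.mem_iff_exists.mp hv
  exact ⟨w, rfl, he⟩

theorem not_adj_of_neighborSet_eq {a b : V} (h : G.neighborSet a = G.neighborSet b) :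
    ¬G.Adj a b := fun hab => G.irrefl (show b ∈ G.neighborSet b from h ▸ hab)

end SimpleGraph

section Twins

variable {V : Type*} {G : SimpleGraph V}

theorem IsEDS.image_update_deleteIncidenceSet [DecidableEq V] {D : Set (Sym2 V)}
    (hD : IsEDS G D) {y y' : V} (hne : y' ≠ y) (hN : G.neighborSet y ⊆ G.neighborSet y') :
    IsEDS (G.deleteIncidenceSet y) (Sym2.map (Function.update id y y') '' D) := by
  set σ := Function.update id y y'
  have hσ_ne : ∀ a, σ a ≠ y := fun a => by
    by_cases ha : a = y <;> simp [σ, ha, hne]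
  have hσ_adj : ∀ a b, G.Adj a b → G.Adj (σ a) (σ b) := by
    intro a b hab
    rcases eq_or_ne a y with rfl | ha
    · simpa [σ, hab.ne'] using hN hab
    rcases eq_or_ne b y with rfl | hb
    · simpa [σ, ha] using (hN hab.symm).symm
    simpa [σ, ha, hb] using hab
  refine ⟨?_, fun e he => ?_⟩
  · rintro _ ⟨f, hf, rfl⟩
    rw [mem_edgeSet_deleteIncidenceSet]
    induction f using Sym2.ind with
    | _ a b => exact ⟨hσ_adj a b (hD.1 hf), fun h => by
      obtain ⟨c, -, hc⟩ := Sym2.mem_map.mp h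
      exact hσ_ne c hc⟩
  · rw [mem_edgeSet_deleteIncidenceSet] at he
    obtain ⟨f, hf, x, hxe, hxf⟩ := hD.2 e he.1
    have hσx : σ x = x := Function.update_of_ne (ne_of_mem_of_not_mem hxe he.2) _ _
    exact ⟨_, ⟨f, hf, rfl⟩, x, hxe, hσx ▸ Sym2.mem_map.mpr ⟨x, hxf, rfl⟩⟩

theorem IsEDS.of_deleteIncidenceSet {D : Set (Sym2 V)} {y : V}
    (hD : IsEDS (G.deleteIncidenceSet y) D) (hcov : ∀ n ∈ G.neighborSet y, ∃ f ∈ D, n ∈ f) :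
    IsEDS G D := by
  refine ⟨hD.1.trans (edgeSet_mono (G.deleteIncidenceSet_le y)), fun e he => ?_⟩
  by_cases hye : y ∈ e
  · obtain ⟨n, rfl, hn⟩ := exists_adj_of_mem_edgeSet he hye
    obtain ⟨f, hf, hnf⟩ := hcov n hn
    exact ⟨f, hf, n, Sym2.mem_mk_right y n, hnf⟩
  · exact hD.2 e (mem_edgeSet_deleteIncidenceSet.mpr ⟨he, hye⟩)

variable {D : Set (Sym2 V)} {N Y : Set V}

theorem IsEDS.covers_twins_of_not_covers (htwin : ∀ y ∈ Y, G.neighborSet y = N)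
    (hD : IsEDS G D) {n₀ : V} (hn₀ : n₀ ∈ N) (hunc : ∀ f ∈ D, n₀ ∉ f) :
    ∀ y ∈ Y, ∃ f ∈ D, y ∈ f := by
  intro y hy
  have hadj : n₀ ∈ G.neighborSet y := (htwin y hy).symm ▸ hn₀
  obtain ⟨f, hf, x, hxe, hxf⟩ := hD.2 s(y, n₀) hadj
  rcases Sym2.mem_iff.mp hxe with rfl | rfl
  · exact ⟨f, hf, hxf⟩
  · exact absurd hxf (hunc f hf)

theorem ncard_twins_le_ncard_edges_meeting [Finite V] (htwin : ∀ y ∈ Y, G.neighborSet y = N)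
    (hsub : D ⊆ G.edgeSet) (hcov : ∀ y ∈ Y, ∃ f ∈ D, y ∈ f) :
    Y.ncard ≤ {f ∈ D | ∃ y ∈ Y, y ∈ f}.ncard := by
  rcases Y.eq_empty_or_nonempty with rfl | ⟨y₀, -⟩
  · simp
  have : Nonempty (Sym2 V) := ⟨s(y₀, y₀)⟩
  choose! g hgD hg using hcov
  refine Set.ncard_le_ncard_of_injOn g (fun y hy => ⟨hgD y hy, y, hy, hg y hy⟩)
    fun a ha b hb hab => ?_
  by_contra hne
  obtain ⟨z, hz, hadj⟩ := exists_adj_of_mem_edgeSet (hsub (hgD a ha)) (hg a ha)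
  have hb' := hg b hb
  rw [← hab, hz] at hb'
  rcases Sym2.mem_iff.mp hb' with rfl | rfl
  · exact hne rfl
  · exact not_adj_of_neighborSet_eq ((htwin a ha).trans (htwin _ hb).symm) hadj

theorem IsEDS.diff_union_star (htwin : ∀ y ∈ Y, G.neighborSet y = N) (hD : IsEDS G D)
    {y₀ : V} (hy₀ : y₀ ∈ Y) :
    IsEDS G ((D \ {f ∈ D | ∃ y ∈ Y, y ∈ f}) ∪ (fun n => s(y₀, n)) '' N) := by
  have hmeet : ∀ e ∈ G.edgeSet, ∀ y ∈ Y, y ∈ e → ∃ n ∈ N, n ∈ e := fun e he y hy hye => by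
    obtain ⟨n, rfl, hn⟩ := exists_adj_of_mem_edgeSet he hye
    exact ⟨n, htwin y hy ▸ hn, Sym2.mem_mk_right _ _⟩
  refine ⟨Set.union_subset (Set.sdiff_subset.trans hD.1) ?_, fun e he => ?_⟩
  · rintro _ ⟨n, hn, rfl⟩
    exact ((htwin y₀ hy₀).symm ▸ hn : n ∈ G.neighborSet y₀)
  by_cases heN : ∃ n ∈ N, n ∈ e
  · obtain ⟨n, hn, hne⟩ := heN
    exact ⟨s(y₀, n), Or.inr ⟨n, hn, rfl⟩, n, hne, Sym2.mem_mk_right _ _⟩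
  obtain ⟨f, hf, x, hxe, hxf⟩ := hD.2 e he
  refine ⟨f, Or.inl ⟨hf, ?_⟩, x, hxe, hxf⟩
  rintro ⟨-, y, hy, hyf⟩
  obtain ⟨n, rfl, hn⟩ := exists_adj_of_mem_edgeSet (hD.1 hf) hyf
  rcases Sym2.mem_iff.mp hxf with rfl | rfl
  · exact heN (hmeet e he x hy hxe)
  · exact heN ⟨x, htwin y hy ▸ hn, hxe⟩

theorem IsEDS.exists_covers_of_twins [Finite V] (htwin : ∀ y ∈ Y, G.neighborSet y = N)
    (hD : IsEDS G D) (hcard : N.ncard ≤ Y.ncard) :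
    ∃ D', IsEDS G D' ∧ D'.ncard ≤ D.ncard ∧ ∀ n ∈ N, ∃ f ∈ D', n ∈ f := by
  by_cases hcov : ∀ n ∈ N, ∃ f ∈ D, n ∈ f
  · exact ⟨D, hD, le_rfl, hcov⟩
  push Not at hcov
  obtain ⟨n₀, hn₀, hunc⟩ := hcov
  obtain ⟨y₀, hy₀⟩ : Y.Nonempty := Set.nonempty_of_ncard_ne_zero <| by
    have := (Set.ncard_pos).2 ⟨n₀, hn₀⟩
    omega
  set R := {f ∈ D | ∃ y ∈ Y, y ∈ f}
  have hR : Y.ncard ≤ R.ncard := ncard_twins_le_ncard_edges_meeting htwin hD.1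
    (hD.covers_twins_of_not_covers htwin hn₀ hunc)
  refine ⟨(D \ R) ∪ (fun n => s(y₀, n)) '' N, hD.diff_union_star htwin hy₀, ?_,
    fun n hn => ⟨_, Or.inr ⟨n, hn, rfl⟩, Sym2.mem_mk_right _ _⟩⟩
  calc _ ≤ (D \ R).ncard + ((fun n => s(y₀, n)) '' N).ncard := Set.ncard_union_le _ _
    _ ≤ (D.ncard - R.ncard) + N.ncard := by
      rw [Set.ncard_sdiff (Set.sep_subset _ _)]
      gcongr
      exact Set.ncard_image_le (Set.toFinite N)
    _ ≤ D.ncard := by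
      have : R.ncard ≤ D.ncard := Set.ncard_le_ncard (Set.sep_subset _ _)
      omega

end Twins

theorem stmt12_general {V : Type*} [Fintype V] (G : SimpleGraph V) (N Y : Set V)
    (hnbhd : ∀ y ∈ Y, G.neighborSet y = N)
    (hcard : N.ncard < Y.ncard)
    (y : V) (hy : y ∈ Y) (k : ℕ) :
    (∃ D : Set (Sym2 V), IsEDS G D ∧ D.ncard ≤ k) ↔
    (∃ D' : Set (Sym2 ↥{x : V | x ≠ y}), IsEDS (G.induce {x : V | x ≠ y}) D' ∧
      D'.ncard ≤ k) := by
  classical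
  rw [exists_isEDS_induce_ne_iff]
  constructor
  · rintro ⟨D, hD, hk⟩
    rcases N.eq_empty_or_nonempty with rfl | hN
    · rw [deleteIncidenceSet_eq_self (hnbhd y hy)]
      exact ⟨D, hD, hk⟩
    obtain ⟨y', hy', hne⟩ := Set.exists_ne_of_one_lt_ncard
      (lt_of_le_of_lt ((Set.ncard_pos).2 hN) hcard) y
    have hN' : G.neighborSet y ⊆ G.neighborSet y' := ((hnbhd y hy).trans (hnbhd y' hy').symm).le
    exact ⟨_, hD.image_update_deleteIncidenceSet hne hN',
      (Set.ncard_image_le (Set.toFinite D)).trans hk⟩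
  · rintro ⟨D, hD, hk⟩
    have hyN : y ∉ N := hnbhd y hy ▸ G.notMem_neighborSet_self
    have htwin : ∀ y₂ ∈ Y \ {y}, (G.deleteIncidenceSet y).neighborSet y₂ = N := fun y₂ h₂ => by
      rw [neighborSet_deleteIncidenceSet_of_ne h₂.2, hnbhd y₂ h₂.1, Set.sdiff_singleton_eq_self hyN]
    have hcard' : N.ncard ≤ (Y \ {y}).ncard := by
      rw [Set.ncard_sdiff_singleton_of_mem hy]
      omega
    obtain ⟨D₂, hD₂, hle, hcov⟩ := hD.exists_covers_of_twins htwin hcard'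
    exact ⟨D₂, hD₂.of_deleteIncidenceSet (hnbhd y hy ▸ hcov), hle.trans hk⟩

/-- Twin elimination rule for Edge Dominating Set: if `Y` is an independent set of
vertices, disjoint from `N`, each with neighborhood exactly `N`, and `|Y| > |N|`, then
for any `y ∈ Y`, `G` has an edge dominating set of size at most `k` iff `G − y` does. -/
theorem stmt12 {V : Type*} [Fintype V] (G : SimpleGraph V) (N Y : Set V)
    (hdisj : Disjoint Y N)
    (hind : ∀ y₁ ∈ Y, ∀ y₂ ∈ Y, ¬ G.Adj y₁ y₂)
    (hnbhd : ∀ y ∈ Y, G.neighborSet y = N)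
    (hcard : N.ncard < Y.ncard)
    (y : V) (hy : y ∈ Y) (k : ℕ) :
    (∃ D : Set (Sym2 V), IsEDS G D ∧ D.ncard ≤ k) ↔
    (∃ D' : Set (Sym2 ↥{x : V | x ≠ y}), IsEDS (G.induce {x : V | x ≠ y}) D' ∧
      D'.ncard ≤ k) :=
  stmt12_general G N Y hnbhd hcard y hy k
end

section
/- For every natural number r there exists a constant d(r) such that every finite graph with minimum degree at least d(r) contains K_r as a topological minor (i.e., contains a subdivision of K_r as a subgraph). -/
/-!
Induction on the number `m` of edges of the pattern graph `H`: minimum degree `|H| * 2 ^ m`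
suffices. Let `G` have minimum degree `2c` with `c = |H| * 2 ^ m`; passing to a component, `G` is
connected. Choose a connected vertex set `U` maximal such that the contraction `G/U` has at least
`c` times as many edges as vertices (a single vertex qualifies, the whole vertex set does not).
Contracting one more vertex `v ∈ N(U)` into `U` loses at most `1 + |N(v) ∩ N(U)|` edges, so
maximality forces every vertex of `N(U)` to have at least `c` neighbours inside `N(U)`. By
induction `G[N(U)]` contains a subdivision of `H` minus an edge `xy`, and the missing branch path
is routed from `x` to `y` through `U`.
-/

open SimpleGraph

namespace SimpleGraph.Walk

variable {V : Type*} [DecidableEq V] {G : SimpleGraph V} {a b a' b' : V}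

def copySym2 (p : G.Walk a b) (h : s(a', b') = s(a, b)) : G.Walk a' b' :=
  if h' : a' = a ∧ b' = b then p.copy h'.1.symm h'.2.symm
  else
    have h'' := (Sym2.eq_iff.1 h).resolve_left h'
    p.reverse.copy h''.1.symm h''.2.symm

@[simp]
theorem mem_support_copySym2 {p : G.Walk a b} {h : s(a', b') = s(a, b)} {z : V} :
    z ∈ (p.copySym2 h).support ↔ z ∈ p.support := by
  unfold copySym2; split_ifs <;> simp

theorem IsPath.copySym2 {p : G.Walk a b} (hp : p.IsPath) (h : s(a', b') = s(a, b)) :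
    (p.copySym2 h).IsPath := by
  unfold Walk.copySym2; split_ifs <;> simp [hp, hp.reverse]

theorem reverse_copySym2 (p : G.Walk a b) (hab : a ≠ b) (h : s(a', b') = s(a, b)) :
    (p.copySym2 h).reverse = p.copySym2 (Sym2.eq_swap.trans h) := by
  rcases Sym2.eq_iff.1 h with ⟨rfl, rfl⟩ | ⟨rfl, rfl⟩
  · simp [copySym2, hab.symm]
  · simp [copySym2, hab]

end SimpleGraph.Walk

namespace SimpleGraph

variable {V : Type*} {G : SimpleGraph V}

theorem Connected.induce_insert {s : Set V} (hs : (G.induce s).Connected) {u v : V} (hu : u ∈ s)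
    (huv : G.Adj u v) : (G.induce (insert v s)).Connected := by
  rw [Set.insert_eq]
  refine connected_induce_union ?_ hs.preconnected (Set.mem_singleton v) hu huv.symm
  rw [induce_singleton_eq_top]
  exact preconnected_top

theorem Connected.exists_isPath_through {U : Set V} (hU : (G.induce U).Connected)
    {a b u u' : V} (hab : a ≠ b) (ha : a ∉ U) (hb : b ∉ U) (hu : u ∈ U) (hu' : u' ∈ U)
    (hau : G.Adj a u) (hu'b : G.Adj u' b) :
    ∃ p : G.Walk a b, p.IsPath ∧ ∀ z ∈ p.support, z = a ∨ z = b ∨ z ∈ U := by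
  obtain ⟨q', hq', hq'U⟩ : ∃ q' : G.Walk u u', q'.IsPath ∧ ∀ z ∈ q'.support, z ∈ U := by
    obtain ⟨q, hq⟩ := hU.exists_isPath ⟨u, hu⟩ ⟨u', hu'⟩
    have hqU : ∀ z ∈ (q.map (Embedding.induce (G := G) U).toHom).support, z ∈ U := by
      simp only [Walk.support_map, List.mem_map]
      rintro _ ⟨z, -, rfl⟩
      exact z.2
    exact ⟨_, hq.map (Embedding.induce (G := G) U).injective, hqU⟩
  refine ⟨.cons hau (q'.concat hu'b), ?_, ?_⟩
  · refine (hq'.concat (fun h ↦ hb (hq'U b h)) hu'b).cons ?_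
    simp only [Walk.support_concat, List.mem_append, List.mem_singleton, not_or]
    exact ⟨fun h ↦ ha (hq'U a h), hab⟩
  · simp only [Walk.support_cons, Walk.support_concat, List.mem_append,
      List.mem_cons, List.mem_nil_iff, or_false]
    rintro z (rfl | hz | rfl)
    exacts [Or.inl rfl, Or.inr (Or.inr (hq'U z hz)), Or.inr (Or.inl rfl)]

theorem ncard_neighborSet_induce (s : Set V) (v : s) :
    ((G.induce s).neighborSet v).ncard = (G.neighborSet v ∩ s).ncard := by
  rw [← Set.ncard_image_of_injective _ Subtype.val_injective]
  congr 1
  ext w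
  simp [and_comm]

theorem ncard_neighborSet_eq_degree [Fintype V] [DecidableRel G.Adj] (v : V) :
    (G.neighborSet v).ncard = G.degree v := by
  rw [← Nat.card_coe_set_eq, Nat.card_eq_fintype_card, card_neighborSet_eq_degree]

theorem le_card_of_le_ncard_neighborSet [Fintype V] [Nonempty V] {d : ℕ}
    (hG : ∀ v, d ≤ (G.neighborSet v).ncard) : d ≤ Fintype.card V :=
  (hG (Classical.arbitrary V)).trans (Nat.card_eq_fintype_card (α := V) ▸ Set.ncard_le_card _)

theorem exists_connected_induce_le_ncard_neighborSet [Nonempty V] {d : ℕ}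
    (hG : ∀ v, d ≤ (G.neighborSet v).ncard) :
    ∃ S : Set V, (G.induce S).Connected ∧ ∀ v : S, d ≤ ((G.induce S).neighborSet v).ncard := by
  let C := G.connectedComponentMk (Classical.arbitrary V)
  refine ⟨C.supp, C.connected_toSimpleGraph, fun v ↦ ?_⟩
  have hnbr : G.neighborSet v ⊆ C.supp := fun _ ↦ C.mem_supp_of_adj_mem_supp v.2
  rw [ncard_neighborSet_induce, Set.inter_eq_left.2 hnbr]
  exact hG v

end SimpleGraph

namespace SimpleGraph

open Finset

variable {V : Type*} [Fintype V] [DecidableEq V] (G : SimpleGraph V) [DecidableRel G.Adj]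

def externalNbhd (U : Finset V) : Finset V :=
  U.biUnion (fun u ↦ G.neighborFinset u) \ U

def edgesAvoiding (U : Finset V) : Finset (Sym2 V) :=
  G.edgeFinset.filter fun e ↦ ∀ z ∈ e, z ∉ U

/-- For nonempty `U`, the number of edges of the graph obtained from `G` by contracting `U` to a
single vertex. -/
def contractEdgeCount (U : Finset V) : ℕ :=
  #(G.edgesAvoiding U) + #(G.externalNbhd U)

variable {G}

theorem mem_externalNbhd {U : Finset V} {w : V} :
    w ∈ G.externalNbhd U ↔ (∃ u ∈ U, G.Adj u w) ∧ w ∉ U := by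
  simp [externalNbhd]

theorem externalNbhd_singleton (v : V) : G.externalNbhd {v} = G.neighborFinset v := by
  ext w
  simp only [mem_externalNbhd, mem_singleton, exists_eq_left, mem_neighborFinset,
    and_iff_left_iff_imp]
  exact fun h ↦ h.ne'

theorem contractEdgeCount_singleton (v : V) : G.contractEdgeCount {v} = #G.edgeFinset := by
  have hinc : G.incidenceFinset v = G.edgeFinset.filter (v ∈ ·) := G.incidenceFinset_eq_filter v
  have havoid : G.edgesAvoiding {v} = G.edgeFinset.filter (v ∉ ·) := by
    refine filter_congr fun e _ ↦ ⟨fun h hv ↦ h v hv (mem_singleton_self v), ?_⟩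
    exact fun h z hz hzv ↦ h (mem_singleton.1 hzv ▸ hz)
  rw [contractEdgeCount, havoid, externalNbhd_singleton, card_neighborFinset_eq_degree,
    ← card_incidenceFinset_eq_degree, hinc, add_comm]
  exact card_filter_add_card_filter_not _

theorem contractEdgeCount_univ : G.contractEdgeCount univ = 0 := by
  simp [contractEdgeCount, edgesAvoiding, externalNbhd, filter_eq_empty_iff]
  exact fun e _ ↦ ⟨_, Sym2.out_fst_mem e⟩

theorem card_edgesAvoiding_le_insert {U : Finset V} {v : V} :
    #(G.edgesAvoiding U) ≤
      #(G.edgesAvoiding (insert v U)) + #(G.neighborFinset v \ insert v U) := by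
  calc #(G.edgesAvoiding U)
      ≤ #(G.edgesAvoiding (insert v U) ∪ (G.neighborFinset v \ insert v U).image (s(v, ·))) := by
        refine card_le_card fun e he ↦ ?_
        simp only [edgesAvoiding, mem_filter, mem_edgeFinset] at he
        by_cases hve : v ∈ e
        · obtain ⟨w, rfl⟩ := Sym2.mem_iff_exists.1 hve
          have hw := he.2 w (Sym2.mem_mk_right v w)
          refine mem_union_right _ (mem_image.2 ⟨w, ?_, rfl⟩)
          have hvw : G.Adj v w := he.1
          simp [hvw, hvw.ne', hw]
        · simp only [edgesAvoiding, mem_union, mem_filter, mem_edgeFinset, mem_insert]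
          exact Or.inl ⟨he.1, fun z hz hzU ↦ hzU.elim (fun h ↦ hve (h ▸ hz)) (he.2 z hz)⟩
    _ ≤ _ := (card_union_le _ _).trans (Nat.add_le_add_left card_image_le _)

theorem card_externalNbhd_insert {U : Finset V} {v : V} (hv : v ∈ G.externalNbhd U) :
    #(G.externalNbhd U) + #((G.neighborFinset v \ insert v U) \ G.externalNbhd U) ≤
      #(G.externalNbhd (insert v U)) + 1 := by
  have hsub : (G.externalNbhd U).erase v ∪ ((G.neighborFinset v \ insert v U) \ G.externalNbhd U)
      ⊆ G.externalNbhd (insert v U) := by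
    intro w hw
    simp only [mem_union, mem_erase, mem_sdiff, mem_neighborFinset, mem_insert,
      mem_externalNbhd] at hw ⊢
    grind
  have hdisj : Disjoint ((G.externalNbhd U).erase v)
      ((G.neighborFinset v \ insert v U) \ G.externalNbhd U) :=
    disjoint_of_subset_left (erase_subset _ _) disjoint_sdiff
  have hcard := card_le_card hsub
  rw [card_union_of_disjoint hdisj, card_erase_of_mem hv] at hcard
  have := card_pos.2 ⟨v, hv⟩
  omega

theorem contractEdgeCount_le_insert {U : Finset V} {v : V} (hv : v ∈ G.externalNbhd U) :
    G.contractEdgeCount U ≤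
      G.contractEdgeCount (insert v U) + 1 + #(G.externalNbhd U ∩ G.neighborFinset v) := by
  have := card_edgesAvoiding_le_insert (G := G) (U := U) (v := v)
  have := card_inter_add_card_sdiff (G.neighborFinset v \ insert v U) (G.externalNbhd U)
  have : #((G.neighborFinset v \ insert v U) ∩ G.externalNbhd U) ≤
      #(G.externalNbhd U ∩ G.neighborFinset v) :=
    card_le_card fun w hw ↦ by simp_all
  have := card_externalNbhd_insert hv
  unfold contractEdgeCount
  omega

theorem Preconnected.externalNbhd_nonempty (hG : G.Preconnected) {U : Finset V}
    (hU : U.Nonempty) (hU_ne : U ≠ univ) : (G.externalNbhd U).Nonempty := by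
  obtain ⟨a, ha⟩ := hU
  obtain ⟨b, -, hb⟩ := exists_of_ssubset (ssubset_univ_iff.2 hU_ne)
  obtain ⟨p⟩ := hG a b
  obtain ⟨d, -, hd, hd'⟩ := p.exists_boundary_dart U ha hb
  exact ⟨d.snd, mem_externalNbhd.2 ⟨⟨d.fst, hd, d.adj⟩, hd'⟩⟩

theorem Connected.exists_forall_le_card_externalNbhd_inter (hG : G.Connected) {c : ℕ}
    (hc : 0 < c) (hdeg : ∀ v, 2 * c ≤ G.degree v) :
    ∃ U : Finset V, (G.induce (U : Set V)).Connected ∧ (G.externalNbhd U).Nonempty ∧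
      ∀ v ∈ G.externalNbhd U, c ≤ #(G.externalNbhd U ∩ G.neighborFinset v) := by
  -- `‖G/U‖ ≥ c * (|V| - |U| + 1)`, with the subtraction moved to the other side.
  let good (U : Finset V) : Prop := (G.induce (U : Set V)).Connected ∧
    c * (Fintype.card V + 1) ≤ G.contractEdgeCount U + c * #U
  obtain ⟨v₀⟩ := hG.nonempty
  have hgood₀ : good {v₀} := by
    refine ⟨by rw [coe_singleton, induce_singleton_eq_top]; exact connected_top, ?_⟩
    have hsum := G.sum_degrees_eq_twice_card_edges
    have : Fintype.card V * (2 * c) ≤ ∑ v, G.degree v := by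
      simpa using card_nsmul_le_sum univ _ _ fun v _ ↦ hdeg v
    rw [contractEdgeCount_singleton, card_singleton]
    nlinarith
  obtain ⟨U, hU, hUmax⟩ := exists_max_image (univ.filter good) card ⟨{v₀}, by simpa using hgood₀⟩
  obtain ⟨hUconn, hUgood⟩ := (mem_filter.1 hU).2
  have hU_ne : U ≠ univ := by
    rintro rfl
    rw [contractEdgeCount_univ, card_univ] at hUgood
    nlinarith
  obtain ⟨⟨a, ha⟩⟩ := hUconn.nonempty
  refine ⟨U, hUconn, hG.preconnected.externalNbhd_nonempty ⟨a, ha⟩ hU_ne, fun v hv ↦ ?_⟩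
  obtain ⟨⟨u, hu, huv⟩, hvU⟩ := mem_externalNbhd.1 hv
  have hnot : ¬ good (insert v U) := fun hgood ↦ by
    have := hUmax _ (mem_filter.2 ⟨mem_univ _, hgood⟩)
    rw [card_insert_of_notMem hvU] at this
    omega
  have hconn : (G.induce (insert v U : Finset V)).Connected := by
    rw [coe_insert]
    exact hUconn.induce_insert (mem_coe.2 hu) huv
  have := contractEdgeCount_le_insert hv
  simp only [good, hconn, true_and, not_le, card_insert_of_notMem hvU] at hnot
  nlinarith

end SimpleGraph

structure TopMinorModel {W V : Type*} (H : SimpleGraph W) (G : SimpleGraph V) where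
  branch : W → V
  path : ∀ ⦃u v⦄, H.Adj u v → G.Walk (branch u) (branch v)
  branch_injective : Function.Injective branch
  isPath_path : ∀ ⦃u v⦄ (h : H.Adj u v), (path h).IsPath
  path_symm : ∀ ⦃u v⦄ (h : H.Adj u v), path h.symm = (path h).reverse
  eq_or_eq_of_branch_mem_support :
    ∀ ⦃u v⦄ (h : H.Adj u v) (w : W), branch w ∈ (path h).support → w = u ∨ w = v
  mem_range_of_mem_support_of_mem_support :
    ∀ ⦃u v u' v'⦄ (h : H.Adj u v) (h' : H.Adj u' v'), s(u, v) ≠ s(u', v') →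
      ∀ z ∈ (path h).support, z ∈ (path h').support → z ∈ Set.range branch

namespace TopMinorModel

variable {W V V' : Type*} {H : SimpleGraph W} {G : SimpleGraph V} {G' : SimpleGraph V'}

theorem topMinor (M : TopMinorModel H G) : TopMinor H G :=
  ⟨M.branch, fun _ _ h ↦ M.path h, M.branch_injective, fun _ _ h ↦ M.isPath_path h,
    fun _ _ h ↦ M.path_symm h, fun _ _ h ↦ M.eq_or_eq_of_branch_mem_support h,
    fun _ _ h _ _ h' ↦ M.mem_range_of_mem_support_of_mem_support h h'⟩

def verts (M : TopMinorModel H G) : Set V :=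
  Set.range M.branch ∪ {z | ∃ u v, ∃ h : H.Adj u v, z ∈ (M.path h).support}

theorem mem_verts_of_mem_support (M : TopMinorModel H G) {u v : W} (h : H.Adj u v) {z : V}
    (hz : z ∈ (M.path h).support) : z ∈ M.verts :=
  Or.inr ⟨u, v, h, hz⟩

def ofEmbedding (f : W ↪ V) : TopMinorModel (⊥ : SimpleGraph W) G where
  branch := f
  path _ _ h := h.elim
  branch_injective := f.injective
  isPath_path _ _ h := h.elim
  path_symm _ _ h := h.elim
  eq_or_eq_of_branch_mem_support _ _ h := h.elim
  mem_range_of_mem_support_of_mem_support _ _ _ _ h := h.elim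

def map (f : G ↪g G') (M : TopMinorModel H G) : TopMinorModel H G' where
  branch := f ∘ M.branch
  path _ _ h := (M.path h).map f.toHom
  branch_injective := f.injective.comp M.branch_injective
  isPath_path _ _ h := (M.isPath_path h).map f.injective
  path_symm _ _ h := by simp [M.path_symm h, Walk.reverse_map]
  eq_or_eq_of_branch_mem_support _ _ h w hw := by
    simp only [Walk.support_map, List.mem_map] at hw
    obtain ⟨z, hz, hzw⟩ := hw
    exact M.eq_or_eq_of_branch_mem_support h w (f.injective hzw ▸ hz)
  mem_range_of_mem_support_of_mem_support _ _ _ _ h h' hne z hz hz' := by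
    simp only [Walk.support_map, List.mem_map] at hz hz'
    obtain ⟨y, hy, rfl⟩ := hz
    obtain ⟨y', hy', hyy'⟩ := hz'
    obtain ⟨w, rfl⟩ :=
      M.mem_range_of_mem_support_of_mem_support h h' hne y hy (f.injective hyy' ▸ hy')
    exact ⟨w, rfl⟩

theorem verts_map_subset (f : G ↪g G') (M : TopMinorModel H G) :
    (M.map f).verts ⊆ Set.range f := by
  rintro z (⟨w, rfl⟩ | ⟨u, v, h, hz⟩)
  · exact ⟨_, rfl⟩
  · simp only [map, Walk.support_map, List.mem_map] at hz
    obtain ⟨y, -, rfl⟩ := hz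
    exact ⟨y, rfl⟩

section AddEdge

variable [DecidableEq W] [DecidableEq V] {x y : W}

def addEdge (M : TopMinorModel (H.deleteEdges {s(x, y)}) G) (hxy : H.Adj x y)
    (p : G.Walk (M.branch x) (M.branch y)) (hp : p.IsPath)
    (hpM : ∀ z ∈ p.support, z ∈ M.verts → z = M.branch x ∨ z = M.branch y) :
    TopMinorModel H G where
  branch := M.branch
  path u v h :=
    if hs : s(u, v) = s(x, y) then p.copySym2 (by simpa using congrArg (Sym2.map M.branch) hs)
    else M.path ((deleteEdges_adj ..).2 ⟨h, hs⟩)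
  branch_injective := M.branch_injective
  isPath_path u v h := by
    split_ifs
    · exact hp.copySym2 _
    · exact M.isPath_path _
  path_symm u v h := by
    by_cases hs : s(u, v) = s(x, y)
    · rw [dif_pos hs, dif_pos (Sym2.eq_swap.trans hs),
        p.reverse_copySym2 (M.branch_injective.ne hxy.ne)]
    · rw [dif_neg hs, dif_neg fun hs' ↦ hs (Sym2.eq_swap.trans hs'), M.path_symm]
  eq_or_eq_of_branch_mem_support u v h w hw := by
    split_ifs at hw with hs
    · have hwxy : w ∈ s(x, y) := by
        rw [Walk.mem_support_copySym2] at hw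
        rcases hpM _ hw (Or.inl ⟨w, rfl⟩) with hwx | hwy
        · exact M.branch_injective hwx ▸ Sym2.mem_mk_left x y
        · exact M.branch_injective hwy ▸ Sym2.mem_mk_right x y
      exact Sym2.mem_iff.1 (hs ▸ hwxy)
    · exact M.eq_or_eq_of_branch_mem_support _ w hw
  mem_range_of_mem_support_of_mem_support u v u' v' h h' hne z hz hz' := by
    have hp_range : ∀ z ∈ p.support, z ∈ M.verts → z ∈ Set.range M.branch := fun z hz hzM ↦
      (hpM z hz hzM).elim (fun h ↦ ⟨x, h.symm⟩) (fun h ↦ ⟨y, h.symm⟩)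
    split_ifs at hz hz' with hs hs'
    · exact absurd (hs.trans hs'.symm) hne
    · exact hp_range z ((Walk.mem_support_copySym2).1 hz) (M.mem_verts_of_mem_support _ hz')
    · exact hp_range z ((Walk.mem_support_copySym2).1 hz') (M.mem_verts_of_mem_support _ hz)
    · exact M.mem_range_of_mem_support_of_mem_support _ _ hne z hz hz'

end AddEdge

theorem nonempty_of_edgeSet_eq_empty [Fintype W] [Fintype V] (hH : H.edgeSet = ∅)
    (hWV : Fintype.card W ≤ Fintype.card V) : Nonempty (TopMinorModel H G) := by
  obtain ⟨f⟩ := Function.Embedding.nonempty_of_card_le hWV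
  rw [edgeSet_eq_empty.1 hH]
  exact ⟨ofEmbedding f⟩

theorem nonempty_of_connected_of_forall_induce [Fintype V] (hG : G.Connected) {c : ℕ}
    (hc : 0 < c) (hdeg : ∀ v, 2 * c ≤ (G.neighborSet v).ncard) {x y : W} (hxy : H.Adj x y)
    (hdel : ∀ S : Set V, Nonempty S → (∀ v : S, c ≤ ((G.induce S).neighborSet v).ncard) →
      Nonempty (TopMinorModel (H.deleteEdges {s(x, y)}) (G.induce S))) :
    Nonempty (TopMinorModel H G) := by
  classical
  obtain ⟨U, hUconn, hN, hNdeg⟩ := hG.exists_forall_le_card_externalNbhd_inter hc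
    fun v ↦ G.ncard_neighborSet_eq_degree v ▸ hdeg v
  set N := G.externalNbhd U
  obtain ⟨M₀⟩ := hdel N hN.coe_sort fun v ↦ by
    rw [ncard_neighborSet_induce, ← coe_neighborFinset, ← Finset.coe_inter, Set.ncard_coe_finset,
      Finset.inter_comm]
    exact hNdeg v v.2
  let M := M₀.map (Embedding.induce (N : Set V))
  have hMN : M.verts ⊆ N := (M₀.verts_map_subset _).trans fun _ ⟨z, hz⟩ ↦ hz ▸ z.2
  obtain ⟨⟨u, hu, hux⟩, hxU⟩ := mem_externalNbhd.1 (hMN (Or.inl ⟨x, rfl⟩))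
  obtain ⟨⟨u', hu', hu'y⟩, hyU⟩ := mem_externalNbhd.1 (hMN (Or.inl ⟨y, rfl⟩))
  obtain ⟨p, hp, hpU⟩ :=
    hUconn.exists_isPath_through (M.branch_injective.ne hxy.ne) hxU hyU hu hu' hux.symm hu'y
  refine ⟨M.addEdge hxy p hp fun z hz hzM ↦ ?_⟩
  rcases hpU z hz with hzx | hzy | hzU
  exacts [.inl hzx, .inr hzy, absurd hzU (mem_externalNbhd.1 (hMN hzM)).2]

theorem nonempty_of_le_ncard_neighborSet [Fintype W] [Fintype V] [Nonempty V] {m : ℕ}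
    (hH : H.edgeSet.ncard ≤ m) (hG : ∀ v, Fintype.card W * 2 ^ m ≤ (G.neighborSet v).ncard) :
    Nonempty (TopMinorModel H G) := by
  induction m generalizing H V with
  | zero =>
    exact nonempty_of_edgeSet_eq_empty ((Set.ncard_eq_zero (Set.toFinite _)).1 (by omega))
      (by simpa using le_card_of_le_ncard_neighborSet hG)
  | succ m ih =>
    by_cases hE : H.edgeSet = ∅
    · exact nonempty_of_edgeSet_eq_empty hE
        ((Nat.le_mul_of_pos_right _ (by positivity)).trans (le_card_of_le_ncard_neighborSet hG))
    obtain ⟨e, he⟩ := Set.nonempty_iff_ne_empty.2 hE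
    induction e using Sym2.ind with | h x y => ?_
    have hxy : H.Adj x y := he
    have hH' : (H.deleteEdges {s(x, y)}).edgeSet.ncard ≤ m := by
      rw [edgeSet_deleteEdges, Set.ncard_sdiff_singleton_of_mem he]
      omega
    have hc : 0 < Fintype.card W * 2 ^ m :=
      Nat.mul_pos (Fintype.card_pos_iff.2 ⟨x⟩) (by positivity)
    have hpow : 2 * (Fintype.card W * 2 ^ m) = Fintype.card W * 2 ^ (m + 1) := by ring
    classical
    obtain ⟨S, hS, hSdeg⟩ := exists_connected_induce_le_ncard_neighborSet hG
    obtain ⟨M⟩ := nonempty_of_connected_of_forall_induce hS hc (fun v ↦ hpow ▸ hSdeg v) hxy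
      fun _ _ hT ↦ ih hH' hT
    exact ⟨M.map (Embedding.induce S)⟩

end TopMinorModel

/-- (Mader's theorem) For every `r` there exists a constant `d` such that every finite
nonempty graph with minimum degree at least `d` contains `K_r` as a topological minor. -/
theorem stmt15 (r : ℕ) :
    ∃ d : ℕ, ∀ (V : Type) [Fintype V] [Nonempty V] (G : SimpleGraph V),
      (∀ v : V, d ≤ (G.neighborSet v).ncard) →
      TopMinor (⊤ : SimpleGraph (Fin r)) G := by
  classical
  refine ⟨r * 2 ^ r.choose 2, fun V _ _ G hG ↦ ?_⟩
  have hedges : (⊤ : SimpleGraph (Fin r)).edgeSet.ncard = r.choose 2 := by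
    rw [← coe_edgeFinset, Set.ncard_coe_finset, card_edgeFinset_top_eq_card_choose_two,
      Fintype.card_fin]
  obtain ⟨M⟩ := TopMinorModel.nonempty_of_le_ncard_neighborSet hedges.le (G := G)
    (by simpa using hG)
  exact M.topMinor
end
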